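/- Let 0 < δ < 1 with 1/δ ∈ ℕ, z ∈ ℤ² and ρ ∈ Γ. Let w be a weight with [w]_{A^S_{1,ρ,z}} < ∞, where the side selection is the one produced by the face-selection algorithm (so that each ℓ_i meets at most A·δ^{−5/4} of the sets ℓ_1,…,ℓ_u for an absolute constant A). Then there is a constant C, independent of δ, w, f, ρ, z, such that ‖\tilde M_{ρ,δ} f‖_{L^1(Q_z,w)} ≤ C·δ^{−5/4}·[w]_{A^S_{1,ρ,z}}·‖f‖_{L^1(7Q_z,w)} for all f. -/

import Mathlib

/-!
On the cell `Q_z(i)` the operator is an average of `|f|` over `ℓ_i`. Since `w⁻¹ ≤ ‖w⁻¹‖_{L^∞(ℓ_i)}`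
on `ℓ_i`, the `A_1` condition turns `w(Q_z(i)) |ℓ_i|⁻¹ ∫_{ℓ_i} |f|` into at most
`[w]_{A_1} ∫_{ℓ_i} |f| w`. Summing over `i`, every point of `7 Q_z ⊇ ⋃ ℓ_i` lies in at most
`A δ^{-5/4}` of the sets `ℓ_i`, so the constant is `C = A`.
-/

open MeasureTheory Metric Set
open scoped ENNReal NNReal

noncomputable section

/-- Index of a `k`-face of an axis-parallel cube in `ℝⁿ`: a set of `k` "free" coordinates
together with a sign choice for the remaining coordinates (only the signs of coordinates
outside the free set matter). -/
abbrev FaceIdx (n k : ℕ) := {T : Finset (Fin n) // T.card = k} × (Fin n → Bool)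

/-- The `k`-face of the axis-parallel cube centered at `x` with side length `2 r`
corresponding to the face index `F`. -/
def kFace {n : ℕ} (k : ℕ) (x : Fin n → ℝ) (r : ℝ) (F : FaceIdx n k) : Set (Fin n → ℝ) :=
  {y | (∀ i ∈ F.1.1, |y i - x i| ≤ r) ∧ ∀ i ∉ F.1.1, y i = x i + (if F.2 i then r else -r)}

/-- The `δ`-neighborhood of a `k`-face. -/
def faceNbhd {n : ℕ} (k : ℕ) (δ : ℝ) (x : Fin n → ℝ) (r : ℝ) (F : FaceIdx n k) :
    Set (Fin n → ℝ) :=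
  Metric.cthickening δ (kFace k x r F)

/-- The `δ`-neighborhood of the whole `k`-skeleton. -/
def skelNbhd {n : ℕ} (k : ℕ) (δ : ℝ) (x : Fin n → ℝ) (r : ℝ) : Set (Fin n → ℝ) :=
  ⋃ F : FaceIdx n k, faceNbhd k δ x r F

/-- The `k`-skeleton maximal function with width `δ` (with values in `ℝ≥0∞`):
`M^k_δ f (x) = sup_{1 ≤ r ≤ 2} min_j ⨍_{S^j_{k,δ}(x,r)} |f|`. -/
def skelMax (n k : ℕ) (δ : ℝ) (f : (Fin n → ℝ) → ℝ) (x : Fin n → ℝ) : ℝ≥0∞ :=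
  ⨆ r ∈ Set.Icc (1 : ℝ) 2, ⨅ F : FaceIdx n k,
    (volume (faceNbhd k δ x r F))⁻¹ * ∫⁻ y in faceNbhd k δ x r F, (‖f y‖₊ : ℝ≥0∞)

/-- `L^p` norm of an `ℝ≥0∞`-valued function. -/
def lpNormE {α : Type*} [MeasurableSpace α] (g : α → ℝ≥0∞) (p : ℝ) (μ : Measure α) : ℝ≥0∞ :=
  (∫⁻ x, g x ^ p ∂μ) ^ (1 / p)

/-- The measure `w(x) dx` associated to a weight `w`. -/
def wMeasure {n : ℕ} (w : (Fin n → ℝ) → ℝ) : Measure (Fin n → ℝ) :=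
  volume.withDensity fun x => ENNReal.ofReal (w x)

/-- Average of `g` over the set `A` (with respect to Lebesgue measure). -/
def ravg {n : ℕ} (A : Set (Fin n → ℝ)) (g : (Fin n → ℝ) → ℝ) : ℝ :=
  (volume A).toReal⁻¹ * ∫ y in A, g y

/-- The axis-parallel cube with center `c` and side length `s`. -/
def cube {n : ℕ} (c : Fin n → ℝ) (s : ℝ) : Set (Fin n → ℝ) :=
  {y | ∀ j, |y j - c j| ≤ s / 2}

/-- The closed unit cube `Q_z` with lower-left vertex `z`. -/
def unitCube {n : ℕ} (z : Fin n → ℤ) : Set (Fin n → ℝ) :=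
  {y | ∀ j, (z j : ℝ) ≤ y j ∧ y j ≤ (z j : ℝ) + 1}

/-- The cube `7 Q_z`: same center as `Q_z`, side length `7`. -/
def sevenCube {n : ℕ} (z : Fin n → ℤ) : Set (Fin n → ℝ) :=
  {y | ∀ j, |y j - ((z j : ℝ) + 1 / 2)| ≤ 7 / 2}

/-- The (half-open) grid cell `Q_z(m)` of side length `δ = 1/N` inside `Q_z`. -/
def gridCell {n : ℕ} (N : ℕ) (z : Fin n → ℤ) (m : Fin n → Fin N) : Set (Fin n → ℝ) :=
  {y | ∀ j, (z j : ℝ) + (m j : ℝ) / N ≤ y j ∧ y j < (z j : ℝ) + ((m j : ℝ) + 1) / N}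

/-- The center `x_m` of the grid cell `Q_z(m)`. -/
def gridCenter {n : ℕ} (N : ℕ) (z : Fin n → ℤ) (m : Fin n → Fin N) : Fin n → ℝ :=
  fun j => (z j : ℝ) + ((m j : ℝ) + 1 / 2) / N

/-- Membership in `Γ`: a radius function with values in `[1,2] ∩ δ ℤ`, `δ = 1/N`. -/
def inGamma {n : ℕ} (N : ℕ) (ρ : (Fin n → Fin N) → ℝ) : Prop :=
  ∀ m, ρ m ∈ Set.Icc (1 : ℝ) 2 ∧ ∃ t : ℤ, ρ m = (t : ℝ) / N

/-- The `δ'`-neighborhood `ℓ_m` of the selected `k`-face of the skeleton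
`S_k(x_m, ρ(x_m))`. -/
def selFace {n : ℕ} (k N : ℕ) (z : Fin n → ℤ) (ρ : (Fin n → Fin N) → ℝ)
    (sel : (Fin n → Fin N) → FaceIdx n k) (δ' : ℝ) (m : Fin n → Fin N) : Set (Fin n → ℝ) :=
  Metric.cthickening δ' (kFace k (gridCenter N z m) (ρ m) (sel m))

/-- The linearized `k`-skeleton maximal operator: on the cell `Q_z(m)` it equals the
average of `f` over the `δ'`-neighborhood of the selected face. -/
def linMax {n : ℕ} (k N : ℕ) (z : Fin n → ℤ) (ρ : (Fin n → Fin N) → ℝ)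
    (sel : (Fin n → Fin N) → FaceIdx n k) (δ' : ℝ) (f : (Fin n → ℝ) → ℝ)
    (x : Fin n → ℝ) : ℝ :=
  ∑ m : Fin n → Fin N, Set.indicator (gridCell N z m)
    (fun _ => (volume (selFace k N z ρ sel δ' m)).toReal⁻¹ *
      ∫ y in selFace k N z ρ sel δ' m, f y) x

/-- The local skeleton `A_p` constant `[w]_{A^{S_k}_{p,ρ,z}}` (for `1 < p < ∞`). -/
def ApLoc {n : ℕ} (k N : ℕ) (z : Fin n → ℤ) (ρ : (Fin n → Fin N) → ℝ)
    (sel : (Fin n → Fin N) → FaceIdx n k) (w : (Fin n → ℝ) → ℝ) (p : ℝ) : ℝ≥0∞ :=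
  ⨆ m : Fin n → Fin N,
    ((volume (selFace k N z ρ sel ((N : ℝ)⁻¹) m))⁻¹ *
        ∫⁻ y in gridCell N z m, ENNReal.ofReal (w y)) *
      ((volume (selFace k N z ρ sel ((N : ℝ)⁻¹) m))⁻¹ *
        ∫⁻ y in selFace k N z ρ sel ((N : ℝ)⁻¹) m,
          ENNReal.ofReal (w y) ^ (1 - p / (p - 1))) ^ (p - 1)

/-- The local skeleton `A_1` constant `[w]_{A^{S_k}_{1,ρ,z}}`. -/
def A1Loc {n : ℕ} (k N : ℕ) (z : Fin n → ℤ) (ρ : (Fin n → Fin N) → ℝ)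
    (sel : (Fin n → Fin N) → FaceIdx n k) (w : (Fin n → ℝ) → ℝ) : ℝ≥0∞ :=
  ⨆ m : Fin n → Fin N,
    ((volume (selFace k N z ρ sel ((N : ℝ)⁻¹) m))⁻¹ *
        ∫⁻ y in gridCell N z m, ENNReal.ofReal (w y)) *
      essSup (fun y => (ENNReal.ofReal (w y))⁻¹)
        (volume.restrict (selFace k N z ρ sel ((N : ℝ)⁻¹) m))

/-- The global skeleton `A_p` constant `[w]_{A^{S_k}_p}` (with the `A_1` version at `p = 1`). -/
def ApGlobal {n : ℕ} (k N : ℕ)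
    (sel : (Fin n → ℤ) → ((Fin n → Fin N) → ℝ) → (Fin n → Fin N) → FaceIdx n k)
    (w : (Fin n → ℝ) → ℝ) (p : ℝ) : ℝ≥0∞ :=
  if p = 1 then
    ⨆ z : Fin n → ℤ, ⨆ ρ : {ρ : (Fin n → Fin N) → ℝ // inGamma N ρ},
      A1Loc k N z ρ.1 (sel z ρ.1) w
  else
    ⨆ z : Fin n → ℤ, ⨆ ρ : {ρ : (Fin n → Fin N) → ℝ // inGamma N ρ},
      ApLoc k N z ρ.1 (sel z ρ.1) w p

open scoped Finset Classical

theorem Finset.card_filter_mem_le_ncard_inter_nonempty {α ι : Type*} [Fintype ι]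
    (L : ι → Set α) {i : ι} {y : α} (hy : y ∈ L i) :
    #{j | y ∈ L j} ≤ {j | (L i ∩ L j).Nonempty}.ncard := by
  rw [← Set.ncard_coe_finset]
  refine Set.ncard_le_ncard (fun j hj => ?_) (Set.toFinite _)
  simp only [Finset.coe_filter, Finset.mem_univ, true_and, Set.mem_ofPred_eq] at hj
  exact ⟨y, hy, hj⟩

theorem MeasureTheory.Measure.sum_restrict_le_smul_restrict_iUnion {α ι : Type*}
    [MeasurableSpace α] [Fintype ι] {μ : Measure α} {L : ι → Set α}
    (hL : ∀ i, MeasurableSet (L i)) {B : ℝ≥0∞}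
    (hB : ∀ i, ∀ y ∈ L i, (#{j | y ∈ L j} : ℝ≥0∞) ≤ B) :
    ∑ i, μ.restrict (L i) ≤ B • μ.restrict (⋃ i, L i) := by
  have hpt : ∀ y, ∑ i, (L i).indicator 1 y ≤ (⋃ i, L i).indicator (fun _ => B) y := by
    intro y
    by_cases hy : ∃ i, y ∈ L i
    · obtain ⟨i, hi⟩ := hy
      rw [indicator_of_mem (mem_iUnion_of_mem i hi)]
      simpa [Set.indicator_apply, Finset.sum_boole] using hB i y hi
    · push Not at hy
      simp [indicator_of_notMem (hy _)]
  rw [Measure.le_iff]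
  intro t ht
  calc (∑ i, μ.restrict (L i)) t = ∫⁻ y in t, ∑ i, (L i).indicator 1 y ∂μ := by
        rw [Measure.finsetSum_apply, lintegral_finsetSum _
          fun i _ => measurable_one.indicator (hL i)]
        refine Finset.sum_congr rfl fun i _ => ?_
        rw [lintegral_indicator_one (hL i), Measure.restrict_apply ht,
          Measure.restrict_apply (hL i), Set.inter_comm]
    _ ≤ ∫⁻ y in t, (⋃ i, L i).indicator (fun _ => B) y ∂μ := lintegral_mono hpt
    _ = (B • μ.restrict (⋃ i, L i)) t := by
        rw [lintegral_indicator_const (MeasurableSet.iUnion hL), Measure.smul_apply,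
          Measure.restrict_apply ht, Measure.restrict_apply (MeasurableSet.iUnion hL),
          Set.inter_comm, smul_eq_mul]

theorem MeasureTheory.sum_setLIntegral_le_mul_setLIntegral_iUnion {α ι : Type*}
    [MeasurableSpace α] [Fintype ι] {μ : Measure α} {L : ι → Set α}
    (hL : ∀ i, MeasurableSet (L i)) {B : ℝ≥0∞}
    (hB : ∀ i, ∀ y ∈ L i, (#{j | y ∈ L j} : ℝ≥0∞) ≤ B) (g : α → ℝ≥0∞) :
    ∑ i, ∫⁻ y in L i, g y ∂μ ≤ B * ∫⁻ y in ⋃ i, L i, g y ∂μ := by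
  rw [← lintegral_finsetSum_measure, ← smul_eq_mul, ← lintegral_smul_measure]
  exact lintegral_mono' (Measure.sum_restrict_le_smul_restrict_iUnion hL hB) le_rfl

theorem MeasureTheory.lintegral_le_essSup_inv_mul_lintegral_withDensity {α : Type*}
    [MeasurableSpace α] {μ : Measure α} {W : α → ℝ≥0∞} (hW : AEMeasurable W μ)
    (hW_top : ∀ᵐ x ∂μ, W x < ∞) (hs : essSup (fun x => (W x)⁻¹) μ ≠ ∞) (g : α → ℝ≥0∞) :
    ∫⁻ x, g x ∂μ ≤ essSup (fun x => (W x)⁻¹) μ * ∫⁻ x, g x ∂μ.withDensity W := by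
  rw [lintegral_withDensity_eq_lintegral_mul_non_measurable₀ μ hW hW_top,
    ← lintegral_const_mul' _ _ hs]
  refine lintegral_mono_ae ?_
  filter_upwards [ENNReal.ae_le_essSup fun x => (W x)⁻¹, hW_top] with x hx hx_top
  have hW0 : W x ≠ 0 := by
    rintro h
    simp only [h, ENNReal.inv_zero, top_le_iff] at hx
    exact hs hx
  calc g x = W x * g x * (W x)⁻¹ := by
        rw [mul_comm (W x), mul_assoc, ENNReal.mul_inv_cancel hW0 hx_top.ne, mul_one]
    _ ≤ W x * g x * essSup (fun x => (W x)⁻¹) μ := by gcongr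
    _ = _ := mul_comm _ _

theorem MeasureTheory.mul_lintegral_le_mul_essSup_inv_mul_lintegral_withDensity {α : Type*}
    [MeasurableSpace α] {μ : Measure α} {W : α → ℝ≥0∞} (hW : AEMeasurable W μ)
    (hW_top : ∀ᵐ x ∂μ, W x < ∞) {a : ℝ≥0∞} (ha : a * essSup (fun x => (W x)⁻¹) μ ≠ ∞)
    (g : α → ℝ≥0∞) :
    a * ∫⁻ x, g x ∂μ ≤ a * essSup (fun x => (W x)⁻¹) μ * ∫⁻ x, g x ∂μ.withDensity W := by
  rcases eq_or_ne a 0 with rfl | ha0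
  · simp
  rw [mul_assoc]
  gcongr
  exact lintegral_le_essSup_inv_mul_lintegral_withDensity hW hW_top
    (fun hs => ha (by rw [hs, ENNReal.mul_top ha0])) g

theorem kFace_subset_closedBall {n k : ℕ} {x : Fin n → ℝ} {r : ℝ} (hr : 0 ≤ r)
    (F : FaceIdx n k) : kFace k x r F ⊆ closedBall x r := by
  intro y hy
  rw [mem_closedBall, dist_pi_le_iff hr]
  intro i
  rw [Real.dist_eq]
  by_cases hi : i ∈ F.1.1
  · exact hy.1 i hi
  · rw [hy.2 i hi]
    split_ifs <;> simp [abs_of_nonneg hr]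

theorem sevenCube_eq_closedBall {n : ℕ} (z : Fin n → ℤ) :
    sevenCube z = closedBall (fun j => (z j : ℝ) + 1 / 2) (7 / 2) := by
  ext y
  simp only [sevenCube, mem_ofPred_eq, mem_closedBall, dist_pi_le_iff (by norm_num : (0 : ℝ) ≤ 7 / 2),
    Real.dist_eq]

theorem gridCenter_mem_closedBall {n N : ℕ} (z : Fin n → ℤ) (m : Fin n → Fin N) :
    gridCenter N z m ∈ closedBall (fun j => (z j : ℝ) + 1 / 2) (1 / 2) := by
  rw [mem_closedBall, dist_pi_le_iff (by norm_num)]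
  intro j
  have hN : (0 : ℝ) < N := by exact_mod_cast (m j).pos
  have hmN : (m j : ℝ) + 1 ≤ N := by exact_mod_cast (m j).isLt
  rw [Real.dist_eq, gridCenter, abs_le]
  constructor
  · have : 0 ≤ ((m j : ℝ) + 1 / 2) / N := by positivity
    linarith
  · have : ((m j : ℝ) + 1 / 2) / N ≤ 1 := by rw [div_le_one hN]; linarith
    linarith

theorem selFace_subset_sevenCube {n k N : ℕ} {z : Fin n → ℤ} {ρ : (Fin n → Fin N) → ℝ}
    (sel : (Fin n → Fin N) → FaceIdx n k) {δ' : ℝ} {m : Fin n → Fin N} (hδ' : 0 ≤ δ')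
    (hρ : 0 ≤ ρ m) (hδρ : δ' + ρ m ≤ 3) : selFace k N z ρ sel δ' m ⊆ sevenCube z := by
  calc selFace k N z ρ sel δ' m ⊆ cthickening δ' (closedBall (gridCenter N z m) (ρ m)) :=
        cthickening_subset_of_subset _ (kFace_subset_closedBall hρ _)
    _ = closedBall (gridCenter N z m) (δ' + ρ m) := cthickening_closedBall hδ' hρ _
    _ ⊆ sevenCube z := by
        rw [sevenCube_eq_closedBall]
        refine closedBall_subset_closedBall' ?_
        have := mem_closedBall.mp (gridCenter_mem_closedBall z m)
        linarith

theorem measurableSet_selFace {n k N : ℕ} (z : Fin n → ℤ) (ρ : (Fin n → Fin N) → ℝ)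
    (sel : (Fin n → Fin N) → FaceIdx n k) (δ' : ℝ) (m : Fin n → Fin N) :
    MeasurableSet (selFace k N z ρ sel δ' m) :=
  isClosed_cthickening.measurableSet

theorem measurableSet_gridCell {n N : ℕ} (z : Fin n → ℤ) (m : Fin n → Fin N) :
    MeasurableSet (gridCell N z m) := by
  have : gridCell N z m =
      Set.pi univ fun j => Ico ((z j : ℝ) + (m j : ℝ) / N) ((z j : ℝ) + ((m j : ℝ) + 1) / N) := by
    ext y
    simp [gridCell]
  rw [this]
  exact MeasurableSet.univ_pi fun _ => measurableSet_Ico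

theorem ENNReal.ofReal_toReal_inv_le (a : ℝ≥0∞) : ENNReal.ofReal a.toReal⁻¹ ≤ a⁻¹ := by
  rw [← ENNReal.toReal_inv]
  exact ENNReal.ofReal_toReal_le

theorem enorm_linMax_le {n k N : ℕ} (z : Fin n → ℤ) (ρ : (Fin n → Fin N) → ℝ)
    (sel : (Fin n → Fin N) → FaceIdx n k) (δ' : ℝ) (f : (Fin n → ℝ) → ℝ) (x : Fin n → ℝ) :
    ‖linMax k N z ρ sel δ' f x‖ₑ ≤ ∑ m, (gridCell N z m).indicator (fun _ =>
      (volume (selFace k N z ρ sel δ' m))⁻¹ * ∫⁻ y in selFace k N z ρ sel δ' m, ‖f y‖ₑ) x := by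
  refine (enorm_sum_le _ _).trans (Finset.sum_le_sum fun m _ => ?_)
  rw [enorm_indicator_eq_indicator_enorm]
  refine indicator_le_indicator ?_
  rw [enorm_mul, Real.enorm_of_nonneg (by positivity)]
  exact mul_le_mul' (ENNReal.ofReal_toReal_inv_le _) (enorm_integral_le_lintegral_enorm _)

theorem setLIntegral_enorm_linMax_le {n k N : ℕ} (μ : Measure (Fin n → ℝ)) (E : Set (Fin n → ℝ))
    (z : Fin n → ℤ) (ρ : (Fin n → Fin N) → ℝ) (sel : (Fin n → Fin N) → FaceIdx n k) (δ' : ℝ)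
    (f : (Fin n → ℝ) → ℝ) :
    ∫⁻ x in E, ‖linMax k N z ρ sel δ' f x‖ₑ ∂μ ≤ ∑ m, μ (gridCell N z m) *
      ((volume (selFace k N z ρ sel δ' m))⁻¹ * ∫⁻ y in selFace k N z ρ sel δ' m, ‖f y‖ₑ) := by
  calc ∫⁻ x in E, ‖linMax k N z ρ sel δ' f x‖ₑ ∂μ
      ≤ ∫⁻ x, ∑ m, (gridCell N z m).indicator (fun _ => (volume (selFace k N z ρ sel δ' m))⁻¹ *
          ∫⁻ y in selFace k N z ρ sel δ' m, ‖f y‖ₑ) x ∂μ :=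
        lintegral_mono' Measure.restrict_le_self (enorm_linMax_le z ρ sel δ' f)
    _ = _ := by
        rw [lintegral_finsetSum _ fun m _ => measurable_const.indicator (measurableSet_gridCell z m)]
        simp only [lintegral_indicator_const (measurableSet_gridCell z _), mul_comm]

theorem wMeasure_gridCell_mul_average_le {n k N : ℕ} {z : Fin n → ℤ}
    {ρ : (Fin n → Fin N) → ℝ} {sel : (Fin n → Fin N) → FaceIdx n k} {w : (Fin n → ℝ) → ℝ}
    (hw : AEMeasurable w) (hA1 : A1Loc k N z ρ sel w ≠ ⊤) (m : Fin n → Fin N)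
    (g : (Fin n → ℝ) → ℝ≥0∞) :
    wMeasure w (gridCell N z m) * ((volume (selFace k N z ρ sel (N : ℝ)⁻¹ m))⁻¹ *
        ∫⁻ y in selFace k N z ρ sel (N : ℝ)⁻¹ m, g y) ≤
      A1Loc k N z ρ sel w * ∫⁻ y in selFace k N z ρ sel (N : ℝ)⁻¹ m, g y ∂wMeasure w := by
  set L := selFace k N z ρ sel (N : ℝ)⁻¹ m
  set s := essSup (fun y => (ENNReal.ofReal (w y))⁻¹) (volume.restrict L)
  set a := (volume L)⁻¹ * ∫⁻ y in gridCell N z m, ENNReal.ofReal (w y)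
  have has : a * s ≤ A1Loc k N z ρ sel w :=
    le_iSup (fun m => ((volume (selFace k N z ρ sel (N : ℝ)⁻¹ m))⁻¹ *
        ∫⁻ y in gridCell N z m, ENNReal.ofReal (w y)) *
      essSup (fun y => (ENNReal.ofReal (w y))⁻¹)
        (volume.restrict (selFace k N z ρ sel (N : ℝ)⁻¹ m))) m
  rw [wMeasure, withDensity_apply', restrict_withDensity']
  calc _ = a * ∫⁻ y in L, g y := by ring
    _ ≤ a * s * ∫⁻ y, g y ∂(volume.restrict L).withDensity fun y => ENNReal.ofReal (w y) :=
        mul_lintegral_le_mul_essSup_inv_mul_lintegral_withDensity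
          (ENNReal.measurable_ofReal.comp_aemeasurable hw.restrict)
          (.of_forall fun _ => ENNReal.ofReal_lt_top) (ne_top_of_le_ne_top hA1 has) g
    _ ≤ _ := by gcongr

/-- endpoint `p = 1` local weighted bound for the linearized skeleton
maximal operator: `‖M̃_{ρ,δ} f‖_{L^1(Q_z,w)} ≤ C δ^{-5/4} [w]_{A^S_{1,ρ,z}} ‖f‖_{L^1(7Q_z,w)}`. -/
theorem sufficient_local_p_one (A : ℝ) (hA : 0 < A) :
    ∃ C : ℝ, 0 < C ∧
      ∀ (N : ℕ), 1 < N → ∀ (δ : ℝ), δ = (N : ℝ)⁻¹ →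
      ∀ (z : Fin 2 → ℤ) (ρ : (Fin 2 → Fin N) → ℝ), inGamma N ρ →
      ∀ sel : (Fin 2 → Fin N) → FaceIdx 2 1,
      (∀ m, ({m' : Fin 2 → Fin N |
          (selFace 1 N z ρ sel δ m ∩ selFace 1 N z ρ sel δ m').Nonempty}.ncard : ℝ) ≤
        A * δ ^ (-(5 : ℝ) / 4)) →
      ∀ w : (Fin 2 → ℝ) → ℝ, (∀ x, 0 ≤ w x) → LocallyIntegrable w volume →
      A1Loc 1 N z ρ sel w ≠ ⊤ →
      ∀ f : (Fin 2 → ℝ) → ℝ,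
        eLpNorm (linMax 1 N z ρ sel δ f) 1 ((wMeasure w).restrict (unitCube z)) ≤
          ENNReal.ofReal (C * δ ^ (-(5 : ℝ) / 4)) * A1Loc 1 N z ρ sel w *
            eLpNorm f 1 ((wMeasure w).restrict (sevenCube z)) := by
  refine ⟨A, hA, ?_⟩
  rintro N hN δ rfl z ρ hρ sel hover w - hw hA1 f
  set L := selFace 1 N z ρ sel (N : ℝ)⁻¹
  set B := ENNReal.ofReal (A * (N : ℝ)⁻¹ ^ (-(5 : ℝ) / 4))
  have hL : ∀ m, L m ⊆ sevenCube z := by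
    have hδ1 : (N : ℝ)⁻¹ ≤ 1 := inv_le_one_of_one_le₀ (by exact_mod_cast hN.le)
    exact fun m => selFace_subset_sevenCube sel (by positivity) (by linarith [(hρ m).1.1])
      (by linarith [(hρ m).1.2])
  have hcount : ∀ m, ∀ y ∈ L m, (#{m' | y ∈ L m'} : ℝ≥0∞) ≤ B := fun m y hy => by
    rw [← ENNReal.ofReal_natCast]
    exact ENNReal.ofReal_le_ofReal (le_trans (by exact_mod_cast
      Finset.card_filter_mem_le_ncard_inter_nonempty L hy) (hover m))
  rw [eLpNorm_one_eq_lintegral_enorm, eLpNorm_one_eq_lintegral_enorm]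
  calc ∫⁻ x in unitCube z, ‖linMax 1 N z ρ sel (N : ℝ)⁻¹ f x‖ₑ ∂wMeasure w
      ≤ ∑ m, wMeasure w (gridCell N z m) * ((volume (L m))⁻¹ * ∫⁻ y in L m, ‖f y‖ₑ) :=
        setLIntegral_enorm_linMax_le _ _ z ρ sel _ f
    _ ≤ ∑ m, A1Loc 1 N z ρ sel w * ∫⁻ y in L m, ‖f y‖ₑ ∂wMeasure w := by
        exact Finset.sum_le_sum fun m _ =>
          wMeasure_gridCell_mul_average_le hw.aestronglyMeasurable.aemeasurable hA1 m _
    _ ≤ A1Loc 1 N z ρ sel w * (B * ∫⁻ y in sevenCube z, ‖f y‖ₑ ∂wMeasure w) := by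
        rw [← Finset.mul_sum]
        gcongr
        exact (sum_setLIntegral_le_mul_setLIntegral_iUnion (measurableSet_selFace z ρ sel _)
          hcount _).trans (by gcongr; exact iUnion_subset hL)
    _ = B * A1Loc 1 N z ρ sel w * ∫⁻ y in sevenCube z, ‖f y‖ₑ ∂wMeasure w := by ring

end
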